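/- Continuation Principle: Let G be a graph and A, B ⊆ V(G) with B ⊆ A. Then γ_g(G|A) ≤ γ_g(G|B) and γ_g′(G|A) ≤ γ_g′(G|B). -/

import Mathlib

open Finset

namespace DomGame

open scoped Classical

noncomputable section

variable {V : Type*}

/-- The closed neighborhood of `x` in `G`, as a `Finset`. -/
def closedNbr (G : SimpleGraph V) [Fintype V] (x : V) : Finset V :=
  Finset.univ.filter (fun y => y = x ∨ G.Adj x y)

lemma card_compl_lt (G : SimpleGraph V) [Fintype V] {S : Finset V} {x : V}
    (h : ¬ closedNbr G x ⊆ S) :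
    (Finset.univ \ (S ∪ closedNbr G x)).card < (Finset.univ \ S).card := by
  obtain ⟨v, hvN, hvS⟩ := Finset.not_subset.mp h
  apply Finset.card_lt_card
  have hsub : Finset.univ \ (S ∪ closedNbr G x) ⊆ Finset.univ \ S := by
    intro y hy
    simp only [Finset.mem_sdiff, Finset.mem_univ, Finset.mem_union, true_and, not_or] at hy ⊢
    exact hy.1
  exact (Finset.ssubset_iff_of_subset hsub).mpr ⟨v, by simp [hvS], by simp [hvN]⟩

/-- The value of the (partially dominated) domination game on `G|S`, with
`dom = true` meaning Dominator moves next, `dom = false` meaning Staller moves next.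
A legal move is a vertex whose closed neighborhood contains a yet undominated vertex;
Dominator minimizes, Staller maximizes the total number of moves. -/
def gameVal (G : SimpleGraph V) [Fintype V] (dom : Bool) (S : Finset V) : ℕ :=
  let moves := Finset.univ.filter (fun x => ¬ closedNbr G x ⊆ S)
  if h : moves.Nonempty then
    if dom then
      moves.attach.inf' (by simpa using h)
        (fun x => 1 + gameVal G false (S ∪ closedNbr G x.1))
    else
      moves.attach.sup' (by simpa using h)
        (fun x => 1 + gameVal G true (S ∪ closedNbr G x.1))
  else 0
termination_by (Finset.univ \ S).card
decreasing_by
  · exact card_compl_lt G (by simpa using (Finset.mem_filter.mp x.2).2)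
  · exact card_compl_lt G (by simpa using (Finset.mem_filter.mp x.2).2)

/-- The D-game domination number `γ_g(G)`. -/
def gammaD (G : SimpleGraph V) [Fintype V] : ℕ := gameVal G true ∅

/-- The S-game domination number `γ_g'(G)`. -/
def gammaS (G : SimpleGraph V) [Fintype V] : ℕ := gameVal G false ∅

/-- Value of the Staller-pass domination game on `G|S`: Staller may skip
(at most) one move during the game; the skipped turn is not counted.
`dom` tells whose turn it is, `canPass` whether Staller's pass is still available. -/
def spVal (G : SimpleGraph V) [Fintype V] (dom : Bool) (canPass : Bool) (S : Finset V) : ℕ :=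
  let moves := Finset.univ.filter (fun x => ¬ closedNbr G x ⊆ S)
  if h : moves.Nonempty then
    if dom then
      moves.attach.inf' (by simpa using h)
        (fun x => 1 + spVal G false canPass (S ∪ closedNbr G x.1))
    else
      if hc : canPass then
        max (moves.attach.sup' (by simpa using h)
              (fun x => 1 + spVal G true canPass (S ∪ closedNbr G x.1)))
            (spVal G true false S)
      else
        moves.attach.sup' (by simpa using h)
          (fun x => 1 + spVal G true canPass (S ∪ closedNbr G x.1))
  else 0
termination_by ((Finset.univ \ S).card, if canPass then 1 else 0)
decreasing_by
  · exact Prod.Lex.left _ _ (card_compl_lt G (by simpa using (Finset.mem_filter.mp x.2).2))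
  · exact Prod.Lex.left _ _ (card_compl_lt G (by simpa using (Finset.mem_filter.mp x.2).2))
  · simp only [hc, if_true]
    exact Prod.Lex.right _ (by norm_num)
  · exact Prod.Lex.left _ _ (card_compl_lt G (by simpa using (Finset.mem_filter.mp x.2).2))

/-- Value of the Dominator-pass domination game on `G|S`: Dominator may skip
(at most) one move during the game; the skipped turn is not counted. -/
def dpVal (G : SimpleGraph V) [Fintype V] (dom : Bool) (canPass : Bool) (S : Finset V) : ℕ :=
  let moves := Finset.univ.filter (fun x => ¬ closedNbr G x ⊆ S)
  if h : moves.Nonempty then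
    if dom then
      if hc : canPass then
        min (moves.attach.inf' (by simpa using h)
              (fun x => 1 + dpVal G false canPass (S ∪ closedNbr G x.1)))
            (dpVal G false false S)
      else
        moves.attach.inf' (by simpa using h)
          (fun x => 1 + dpVal G false canPass (S ∪ closedNbr G x.1))
    else
      moves.attach.sup' (by simpa using h)
        (fun x => 1 + dpVal G true canPass (S ∪ closedNbr G x.1))
  else 0
termination_by ((Finset.univ \ S).card, if canPass then 1 else 0)
decreasing_by
  · exact Prod.Lex.left _ _ (card_compl_lt G (by simpa using (Finset.mem_filter.mp x.2).2))
  · simp only [hc, if_true]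
    exact Prod.Lex.right _ (by norm_num)
  · exact Prod.Lex.left _ _ (card_compl_lt G (by simpa using (Finset.mem_filter.mp x.2).2))
  · exact Prod.Lex.left _ _ (card_compl_lt G (by simpa using (Finset.mem_filter.mp x.2).2))

/-- The graph `G_{uv}`: obtained from `G - uv` by adding two new vertices
`u' = Sum.inr false` and `v' = Sum.inr true` together with the edges `u v'` and `v u'`. -/
def cutGraph (G : SimpleGraph V) (u v : V) : SimpleGraph (V ⊕ Bool) :=
  SimpleGraph.fromRel (fun x y =>
    match x, y with
    | Sum.inl a, Sum.inl b => G.Adj a b ∧ ¬ (a = u ∧ b = v) ∧ ¬ (a = v ∧ b = u)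
    | Sum.inl a, Sum.inr b => (b = false ∧ a = v) ∨ (b = true ∧ a = u)
    | _, _ => False)

/-- The set of vertices of `G_{uv}` declared dominated, given that `B ⊆ V(G)` is
declared dominated: `B` together with the two new vertices `u'` and `v'`. -/
def cutDom [DecidableEq V] (B : Finset V) : Finset (V ⊕ Bool) :=
  B.image Sum.inl ∪ {Sum.inr false, Sum.inr true}

/-- Disjoint union of two simple graphs. -/
def disjUnion {α β : Type*} (G : SimpleGraph α) (H : SimpleGraph β) :
    SimpleGraph (α ⊕ β) :=
  SimpleGraph.fromRel (fun x y =>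
    match x, y with
    | Sum.inl a, Sum.inl b => G.Adj a b
    | Sum.inr a, Sum.inr b => H.Adj a b
    | _, _ => False)

/-- The disjoint union of `k` paths, the `i`-th on `size i` vertices
(consecutive vertices of each `Fin (size i)` being adjacent). -/
def sigmaPathGraph (k : ℕ) (size : Fin k → ℕ) :
    SimpleGraph (Σ i : Fin k, Fin (size i)) :=
  SimpleGraph.fromRel (fun x y => x.1 = y.1 ∧ x.2.val + 1 = y.2.val)

/-- Vertex set of the three-legged spider `T_{p,q,r}`:
the center together with three legs on `4p`, `4q` and `4r` vertices. -/
abbrev SpiderV (p q r : ℕ) := Unit ⊕ (Fin (4*p) ⊕ (Fin (4*q) ⊕ Fin (4*r)))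

/-- The three-legged spider `T_{p,q,r}`, obtained from paths `P_{4p+1}`, `P_{4q+1}`,
`P_{4r+1}` by identifying one end-vertex of each into the center. In each leg,
vertex `0` is adjacent to the center, and vertices `i`, `i+1` are adjacent. -/
def spider (p q r : ℕ) : SimpleGraph (SpiderV p q r) :=
  SimpleGraph.fromRel (fun x y =>
    match x, y with
    | Sum.inl _, Sum.inr (Sum.inl i) => i.val = 0
    | Sum.inl _, Sum.inr (Sum.inr (Sum.inl i)) => i.val = 0
    | Sum.inl _, Sum.inr (Sum.inr (Sum.inr i)) => i.val = 0
    | Sum.inr (Sum.inl i), Sum.inr (Sum.inl j) => i.val + 1 = j.val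
    | Sum.inr (Sum.inr (Sum.inl i)), Sum.inr (Sum.inr (Sum.inl j)) => i.val + 1 = j.val
    | Sum.inr (Sum.inr (Sum.inr i)), Sum.inr (Sum.inr (Sum.inr j)) => i.val + 1 = j.val
    | _, _ => False)

/-- The weight `w(P'_{4q+r}) = w(P''_{4q+r}) = 2q + c_r` with
`c_0 = 0`, `c_1 = 1`, `c_2 = 3/2`, `c_3 = 7/4`, as a function of `n = 4q + r`. -/
def pathWeight (n : ℕ) : ℚ :=
  2 * (n / 4 : ℕ) +
    (if n % 4 = 0 then 0 else if n % 4 = 1 then 1 else if n % 4 = 2 then 3/2 else 7/4)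

/-!
Induction on `A` downwards, strict supersets of `A` being the smaller cases. Every Staller move `y`
on `G|A` is legal on `G|B`, and `B ∪ N[y] ⊆ A ∪ N[y] ⊋ A`, so Staller's inequality at `A` follows
from Dominator's at strict supersets. Dominator copies an optimal first move `x` on `G|B`; if `x` is
illegal on `G|A`, then `B ∪ N[x] ⊆ A`, and any legal move `z` gives
`γ_g(G|A) ≤ 1 + γ_g′(G|A ∪ N[z]) ≤ 1 + γ_g′(G|A) ≤ 1 + γ_g′(G|B ∪ N[x])`.
-/

section Continuation

variable [Fintype V] (G : SimpleGraph V) {S : Finset V}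

lemma gameVal_of_forall_subset (dom : Bool) (h : ∀ x, closedNbr G x ⊆ S) :
    gameVal G dom S = 0 := by
  rw [gameVal, dif_neg (by simpa using h)]

lemma gameVal_true_le {x : V} (hx : ¬ closedNbr G x ⊆ S) :
    gameVal G true S ≤ 1 + gameVal G false (S ∪ closedNbr G x) := by
  have hmem : x ∈ univ.filter (fun x => ¬ closedNbr G x ⊆ S) := by simpa using hx
  rw [gameVal.eq_1 G true S, dif_pos ⟨x, hmem⟩, if_pos rfl]
  exact inf'_le _ (mem_attach _ ⟨x, hmem⟩)

lemma exists_gameVal_true_eq {x : V} (hx : ¬ closedNbr G x ⊆ S) :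
    ∃ y, ¬ closedNbr G y ⊆ S ∧ gameVal G true S = 1 + gameVal G false (S ∪ closedNbr G y) := by
  have hmem : x ∈ univ.filter (fun x => ¬ closedNbr G x ⊆ S) := by simpa using hx
  rw [gameVal.eq_1 G true S, dif_pos ⟨x, hmem⟩, if_pos rfl]
  obtain ⟨y, -, hy⟩ := exists_mem_eq_inf' ⟨_, mem_attach _ ⟨x, hmem⟩⟩
    (fun y : {y // y ∈ univ.filter (fun x => ¬ closedNbr G x ⊆ S)} =>
      1 + gameVal G false (S ∪ closedNbr G y.1))
  exact ⟨y.1, (mem_filter.mp y.2).2, hy⟩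

lemma le_gameVal_false {x : V} (hx : ¬ closedNbr G x ⊆ S) :
    1 + gameVal G true (S ∪ closedNbr G x) ≤ gameVal G false S := by
  have hmem : x ∈ univ.filter (fun x => ¬ closedNbr G x ⊆ S) := by simpa using hx
  rw [gameVal.eq_1 G false S, dif_pos ⟨x, hmem⟩, if_neg Bool.false_ne_true]
  exact le_sup' (fun y : {y // y ∈ univ.filter (fun x => ¬ closedNbr G x ⊆ S)} =>
    1 + gameVal G true (S ∪ closedNbr G y.1)) (mem_attach _ ⟨x, hmem⟩)

lemma gameVal_false_le {m : ℕ}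
    (h : ∀ x, ¬ closedNbr G x ⊆ S → 1 + gameVal G true (S ∪ closedNbr G x) ≤ m) :
    gameVal G false S ≤ m := by
  rw [gameVal]
  split
  · rw [if_neg Bool.false_ne_true]
    exact sup'_le _ _ fun y _ => h y.1 (mem_filter.mp y.2).2
  · exact Nat.zero_le m

variable {G} {A B : Finset V}

lemma gameVal_false_anti_of_gt
    (hgt : ∀ A', A < A' → ∀ B ⊆ A', gameVal G true A' ≤ gameVal G true B) (hBA : B ⊆ A) :
    gameVal G false A ≤ gameVal G false B := by
  refine gameVal_false_le G fun y hyA => ?_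
  have hyB : ¬ closedNbr G y ⊆ B := fun h => hyA (h.trans hBA)
  have := hgt (A ∪ closedNbr G y) (left_lt_sup.2 hyA) (B ∪ closedNbr G y)
    (union_subset_union_left hBA)
  have := le_gameVal_false G hyB
  omega

lemma gameVal_true_anti_of_gt
    (hgt : ∀ A', A < A' → ∀ B ⊆ A', gameVal G false A' ≤ gameVal G false B)
    (hfalse : ∀ B ⊆ A, gameVal G false A ≤ gameVal G false B) (hBA : B ⊆ A) :
    gameVal G true A ≤ gameVal G true B := by
  by_cases hA : ∀ x, closedNbr G x ⊆ A
  · simp [gameVal_of_forall_subset G true hA]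
  obtain ⟨z, hzA⟩ := not_forall.1 hA
  obtain ⟨x, -, hx⟩ := exists_gameVal_true_eq G fun h => hzA (h.trans hBA)
  rw [hx]
  by_cases hxA : closedNbr G x ⊆ A
  · have hdom : gameVal G true A ≤ 1 + gameVal G false A := by
      have := hgt (A ∪ closedNbr G z) (left_lt_sup.2 hzA) A subset_union_left
      have := gameVal_true_le G hzA
      omega
    have := hfalse _ (union_subset hBA hxA)
    omega
  · have := hgt (A ∪ closedNbr G x) (left_lt_sup.2 hxA) (B ∪ closedNbr G x)
      (union_subset_union_left hBA)
    have := gameVal_true_le G hxA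
    omega

lemma gameVal_anti (hBA : B ⊆ A) :
    gameVal G true A ≤ gameVal G true B ∧ gameVal G false A ≤ gameVal G false B := by
  induction A using WellFoundedGT.induction generalizing B with
  | _ A ih =>
    have hfalse : ∀ B ⊆ A, gameVal G false A ≤ gameVal G false B := fun _ =>
      gameVal_false_anti_of_gt fun A' hA' _ hB' => (ih A' hA' hB').1
    exact ⟨gameVal_true_anti_of_gt (fun A' hA' _ hB' => (ih A' hA' hB').2) hfalse hBA,
      hfalse B hBA⟩

end Continuation

/-- Continuation Principle: if `B ⊆ A` then `γ_g(G|A) ≤ γ_g(G|B)` and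
`γ_g′(G|A) ≤ γ_g′(G|B)`. -/
theorem continuation_principle {V : Type*} [Fintype V] (G : SimpleGraph V)
    (A B : Finset V) (hBA : B ⊆ A) :
    gameVal G true A ≤ gameVal G true B ∧ gameVal G false A ≤ gameVal G false B :=
  gameVal_anti hBA

end

end DomGame
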